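/- arXiv:1708.02331 — 2 statements merged into one kernel-verified Lean document; each statement's English description precedes it below -/
import Mathlib

section
/- Let X be a g-tuple of compact self-adjoint operators on H such that 0 is in the finite interior of K_X, witnessed by an isometry Z_0 : H_1 → H^{m_0} with Z_0*(I_{m_0} ⊗ X)Z_0 = 0. Then for any positive integers m, n and any contraction W : H_n → H^m, there exists an isometry T : H_n → H^{m + n·m_0} such that W*(I_m ⊗ X)W = T*(I_{m+n·m_0} ⊗ X)T. -/
set_option maxHeartbeats 1000000
set_option synthInstance.maxHeartbeats 400000

instance piLpCompleteSpace {ι : Type*} [Fintype ι] (β : ι → Type*)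
    [∀ i, UniformSpace (β i)] [∀ i, CompleteSpace (β i)] : CompleteSpace (PiLp 2 β) :=
  inferInstance

/-- Finite amplification `I_m ⊗ X` acting on `E^m = PiLp 2 (fun _ : Fin m => E)`. -/
noncomputable def amp {E : Type*} [NormedAddCommGroup E] [InnerProductSpace ℂ E]
    (m : ℕ) (X : E →L[ℂ] E) :
    PiLp 2 (fun _ : Fin m => E) →L[ℂ] PiLp 2 (fun _ : Fin m => E) :=
  ((PiLp.continuousLinearEquiv 2 ℂ (fun _ : Fin m => E)).symm.toContinuousLinearMap).comp
    ((ContinuousLinearMap.pi fun k => X.comp (ContinuousLinearMap.proj k)).comp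
      (PiLp.continuousLinearEquiv 2 ℂ (fun _ : Fin m => E)).toContinuousLinearMap)

/-- Membership in the noncommutative convex hull `K_X`: the tuple `Y` (of operators on a
Hilbert space `E`, e.g. `E = H_n`) has the form `V* (I_H ⊗ X) V` for an isometry
`V : E → H^∞`, where `H^∞ = ℓ²(ℕ, H)` and `I_H ⊗ X` is the operator acting
componentwise as `X i` on `H^∞`. -/
noncomputable def InKX {H : Type*} [NormedAddCommGroup H] [InnerProductSpace ℂ H]
    [CompleteSpace H] {g : ℕ} (X : Fin g → H →L[ℂ] H)
    {E : Type*} [NormedAddCommGroup E] [InnerProductSpace ℂ E] [CompleteSpace E]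
    (Y : Fin g → E →L[ℂ] E) : Prop :=
  ∃ V : E →L[ℂ] lp (fun _ : ℕ => H) 2,
    (∀ x, ‖V x‖ = ‖x‖) ∧
    ∀ i, ∃ XA : lp (fun _ : ℕ => H) 2 →L[ℂ] lp (fun _ : ℕ => H) 2,
      (∀ (v : lp (fun _ : ℕ => H) 2) (k : ℕ), XA v k = X i (v k)) ∧
      Y i = ((ContinuousLinearMap.adjoint V).comp (XA.comp V))

/-- `0` is in the finite interior of `K_X`: there are `d ∈ ℕ` and a unit vector
`v ∈ H^d` with `v* (I_d ⊗ X) v = 0 ∈ ℝ^g`. -/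
noncomputable def ZeroFinInt {H : Type*} [NormedAddCommGroup H] [InnerProductSpace ℂ H]
    {g : ℕ} (X : Fin g → H →L[ℂ] H) : Prop :=
  ∃ d : ℕ, 0 < d ∧ ∃ v : PiLp 2 (fun _ : Fin d => H), ‖v‖ = 1 ∧
    ∀ i, (inner ℂ (amp d (X i) v) v : ℂ) = 0

/-- Direct sum `A ⊕ B` of operators, acting on the Hilbert space direct sum
`E ⊕ F = WithLp 2 (E × F)`. -/
noncomputable def dsum {E F : Type*} [NormedAddCommGroup E] [InnerProductSpace ℂ E]
    [NormedAddCommGroup F] [InnerProductSpace ℂ F]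
    (A : E →L[ℂ] E) (B : F →L[ℂ] F) : WithLp 2 (E × F) →L[ℂ] WithLp 2 (E × F) :=
  ((WithLp.prodContinuousLinearEquiv 2 ℂ E F).symm.toContinuousLinearMap).comp
    ((A.prodMap B).comp (WithLp.prodContinuousLinearEquiv 2 ℂ E F).toContinuousLinearMap)

/-!
The defect `D = (1 - W*W)^{1/2}` satisfies `⟪D x, D y⟫ = ⟪x, y⟫ - ⟪W x, W y⟫`. Stacking `W` on top
of `D ⊗ z`, where `z = Z₀ 1` is a unit vector with `⟪(I ⊗ Xᵢ) z, z⟫ = 0`, gives a map `T` with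
`⟪(I ⊗ B) T x, T y⟫ = ⟪(I ⊗ B) W x, W y⟫ + ⟪D x, D y⟫ ⟪(I ⊗ B) z, z⟫` for every operator `B`.
Taking `B = 1` shows that `T` is an isometry, and taking `B = Xᵢ` kills the last term.
-/

open ContinuousLinearMap
open scoped InnerProductSpace

section Amplification

variable {E : Type*} [NormedAddCommGroup E] [InnerProductSpace ℂ E]

theorem amp_one (m : ℕ) : amp m (1 : E →L[ℂ] E) = 1 :=
  rfl

theorem inner_amp_apply (m : ℕ) (X : E →L[ℂ] E) (v w : PiLp 2 (fun _ : Fin m => E)) :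
    ⟪amp m X v, w⟫_ℂ = ∑ k, ⟪X (v k), w k⟫_ℂ :=
  PiLp.inner_apply _ _

end Amplification

section Columns

variable {E F : Type*} [NormedAddCommGroup E] [InnerProductSpace ℂ E]
  [NormedAddCommGroup F] [InnerProductSpace ℂ F]

noncomputable def colAppend {a b : ℕ} (P : F →L[ℂ] PiLp 2 (fun _ : Fin a => E))
    (Q : F →L[ℂ] PiLp 2 (fun _ : Fin b => E)) : F →L[ℂ] PiLp 2 (fun _ : Fin (a + b) => E) :=
  (PiLp.continuousLinearEquiv 2 ℂ (fun _ : Fin (a + b) => E)).symm.toContinuousLinearMap.comp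
    (ContinuousLinearMap.pi (Fin.addCases (motive := fun _ => F →L[ℂ] E)
      (fun j => (PiLp.proj 2 (fun _ => E) j).comp P) (fun j => (PiLp.proj 2 (fun _ => E) j).comp Q)))

@[simp]
theorem colAppend_apply_castAdd {a b : ℕ} (P : F →L[ℂ] PiLp 2 (fun _ : Fin a => E))
    (Q : F →L[ℂ] PiLp 2 (fun _ : Fin b => E)) (x : F) (j : Fin a) :
    colAppend P Q x (Fin.castAdd b j) = P x j := by
  simp [colAppend]

@[simp]
theorem colAppend_apply_natAdd {a b : ℕ} (P : F →L[ℂ] PiLp 2 (fun _ : Fin a => E))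
    (Q : F →L[ℂ] PiLp 2 (fun _ : Fin b => E)) (x : F) (j : Fin b) :
    colAppend P Q x (Fin.natAdd a j) = Q x j := by
  simp [colAppend]

theorem inner_amp_colAppend {a b : ℕ} (X : E →L[ℂ] E) (P : F →L[ℂ] PiLp 2 (fun _ : Fin a => E))
    (Q : F →L[ℂ] PiLp 2 (fun _ : Fin b => E)) (x y : F) :
    ⟪amp (a + b) X (colAppend P Q x), colAppend P Q y⟫_ℂ =
      ⟪amp a X (P x), P y⟫_ℂ + ⟪amp b X (Q x), Q y⟫_ℂ := by
  simp only [inner_amp_apply, Fin.sum_univ_add, colAppend_apply_castAdd, colAppend_apply_natAdd]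

noncomputable def kronCol {n m : ℕ} (z : PiLp 2 (fun _ : Fin m => E)) :
    EuclideanSpace ℂ (Fin n) →L[ℂ] PiLp 2 (fun _ : Fin (n * m) => E) :=
  (PiLp.continuousLinearEquiv 2 ℂ (fun _ : Fin (n * m) => E)).symm.toContinuousLinearMap.comp
    (ContinuousLinearMap.pi fun k =>
      (EuclideanSpace.proj (finProdFinEquiv.symm k).1).smulRight (z (finProdFinEquiv.symm k).2))

@[simp]
theorem kronCol_apply {n m : ℕ} (z : PiLp 2 (fun _ : Fin m => E)) (v : EuclideanSpace ℂ (Fin n))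
    (k : Fin (n * m)) :
    kronCol z v k = v (finProdFinEquiv.symm k).1 • z (finProdFinEquiv.symm k).2 := by
  simp [kronCol]

theorem inner_amp_kronCol {n m : ℕ} (X : E →L[ℂ] E) (z : PiLp 2 (fun _ : Fin m => E))
    (v w : EuclideanSpace ℂ (Fin n)) :
    ⟪amp (n * m) X (kronCol z v), kronCol z w⟫_ℂ = ⟪v, w⟫_ℂ * ⟪amp m X z, z⟫_ℂ := by
  simp only [inner_amp_apply, kronCol_apply, map_smul, inner_smul_left, inner_smul_right]
  rw [finProdFinEquiv.symm.sum_comp (fun q : Fin n × Fin m =>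
      w q.1 * (starRingEnd ℂ (v q.1) * ⟪X (z q.2), z q.2⟫_ℂ)),
    Fintype.sum_prod_type, PiLp.inner_apply, Finset.sum_mul]
  refine Finset.sum_congr rfl fun j _ => ?_
  rw [Finset.mul_sum]
  refine Finset.sum_congr rfl fun l _ => ?_
  simp only [RCLike.inner_apply]
  ring

end Columns

section Defect

variable {E F : Type*} [NormedAddCommGroup E] [InnerProductSpace ℂ E] [CompleteSpace E]
  [NormedAddCommGroup F] [InnerProductSpace ℂ F] [CompleteSpace F]

theorem one_sub_adjoint_comp_self_nonneg {W : E →L[ℂ] F} (hW : ‖W‖ ≤ 1) :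
    0 ≤ 1 - adjoint W ∘L W := by
  have hpos : 0 ≤ adjoint W ∘L W := (nonneg_iff_isPositive _).2 (isPositive_adjoint_comp_self W)
  refine sub_nonneg.2 ((CStarAlgebra.norm_le_one_iff_of_nonneg _ hpos).1 ?_)
  rw [norm_adjoint_comp_self]
  exact mul_le_one₀ hW (norm_nonneg W) hW

noncomputable def defect (W : E →L[ℂ] F) : E →L[ℂ] E :=
  CFC.sqrt (1 - adjoint W ∘L W)

theorem inner_defect_apply {W : E →L[ℂ] F} (hW : ‖W‖ ≤ 1) (x y : E) :
    ⟪defect W x, defect W y⟫_ℂ = ⟪x, y⟫_ℂ - ⟪W x, W y⟫_ℂ := by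
  have hsa : adjoint (defect W) = defect W :=
    IsSelfAdjoint.adjoint_eq (.of_nonneg (CFC.sqrt_nonneg _))
  have hsq : defect W ∘L defect W = 1 - adjoint W ∘L W :=
    CFC.sqrt_mul_sqrt_self _ (one_sub_adjoint_comp_self_nonneg hW)
  rw [← adjoint_inner_right, hsa, ← comp_apply, hsq]
  simp [inner_sub_right, adjoint_inner_right]

end Defect

theorem adjoint_comp_comp_eq_of_inner {E F G : Type*} [NormedAddCommGroup E]
    [InnerProductSpace ℂ E] [CompleteSpace E] [NormedAddCommGroup F] [InnerProductSpace ℂ F]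
    [CompleteSpace F] [NormedAddCommGroup G] [InnerProductSpace ℂ G] [CompleteSpace G]
    {A : F →L[ℂ] F} {B : G →L[ℂ] G} {V : E →L[ℂ] F} {T : E →L[ℂ] G}
    (h : ∀ x y, ⟪A (V x), V y⟫_ℂ = ⟪B (T x), T y⟫_ℂ) :
    adjoint V ∘L A ∘L V = adjoint T ∘L B ∘L T :=
  ext fun x => ext_inner_right ℂ fun y => by
    simp only [comp_apply, adjoint_inner_left, h]

theorem contraction_compression_eq_isometry_compression_general
    {H : Type*} [NormedAddCommGroup H] [InnerProductSpace ℂ H] [CompleteSpace H]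
    {g : ℕ} (X : Fin g → H →L[ℂ] H)
    (m₀ : ℕ)
    (Z₀ : EuclideanSpace ℂ (Fin 1) →L[ℂ] PiLp 2 (fun _ : Fin m₀ => H))
    (hZ₀iso : ∀ x, ‖Z₀ x‖ = ‖x‖)
    (hZ₀zero : ∀ i, (ContinuousLinearMap.adjoint Z₀).comp ((amp m₀ (X i)).comp Z₀) = 0)
    (m n : ℕ)
    (W : EuclideanSpace ℂ (Fin n) →L[ℂ] PiLp 2 (fun _ : Fin m => H))
    (hW : ‖W‖ ≤ 1) :
    ∃ T : EuclideanSpace ℂ (Fin n) →L[ℂ] PiLp 2 (fun _ : Fin (m + n * m₀) => H),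
      (∀ x, ‖T x‖ = ‖x‖) ∧
      ∀ i, (ContinuousLinearMap.adjoint W).comp ((amp m (X i)).comp W) =
        (ContinuousLinearMap.adjoint T).comp ((amp (m + n * m₀) (X i)).comp T) := by
  set z := Z₀ (EuclideanSpace.single 0 1)
  have hz : ⟪z, z⟫_ℂ = 1 := by
    rw [inner_self_eq_norm_sq_to_K, hZ₀iso]
    simp
  have hzX (i : Fin g) : ⟪amp m₀ (X i) z, z⟫_ℂ = 0 := by
    have hZe := DFunLike.congr_fun (hZ₀zero i) (EuclideanSpace.single 0 1)
    simp only [comp_apply, zero_apply] at hZe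
    rw [← adjoint_inner_left, hZe, inner_zero_left]
  set T := colAppend W (kronCol z ∘L defect W)
  have hT (B : H →L[ℂ] H) (x y) : ⟪amp (m + n * m₀) B (T x), T y⟫_ℂ =
      ⟪amp m B (W x), W y⟫_ℂ + (⟪x, y⟫_ℂ - ⟪W x, W y⟫_ℂ) * ⟪amp m₀ B z, z⟫_ℂ := by
    rw [inner_amp_colAppend, comp_apply, comp_apply, inner_amp_kronCol, inner_defect_apply hW]
  refine ⟨T, (LinearMap.norm_map_iff_inner_map_map T).2 fun x y => ?_, fun i =>
    adjoint_comp_comp_eq_of_inner fun x y => ?_⟩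
  · simpa only [amp_one, one_apply_eq_self, hz, mul_one, add_sub_cancel] using hT 1 x y
  · rw [hT, hzX, mul_zero, add_zero]

/-- if `X` is a tuple of compact self-adjoint operators and `0` is in the
finite interior of `K_X`, witnessed by an isometry `Z₀ : H_1 → H^{m₀}` with
`Z₀*(I_{m₀} ⊗ X)Z₀ = 0`, then every compression of `I_m ⊗ X` by a contraction
`W : H_n → H^m` is also a compression of `I_{m+n·m₀} ⊗ X` by an isometry `T`. -/
theorem contraction_compression_eq_isometry_compression
    {H : Type*} [NormedAddCommGroup H] [InnerProductSpace ℂ H] [CompleteSpace H]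
    {g : ℕ} (X : Fin g → H →L[ℂ] H)
    (hXc : ∀ i, IsCompactOperator (X i)) (hXsa : ∀ i, IsSelfAdjoint (X i))
    (m₀ : ℕ) (hm₀ : 0 < m₀)
    (Z₀ : EuclideanSpace ℂ (Fin 1) →L[ℂ] PiLp 2 (fun _ : Fin m₀ => H))
    (hZ₀iso : ∀ x, ‖Z₀ x‖ = ‖x‖)
    (hZ₀zero : ∀ i, (ContinuousLinearMap.adjoint Z₀).comp ((amp m₀ (X i)).comp Z₀) = 0)
    (m n : ℕ) (hm : 0 < m) (hn : 0 < n)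
    (W : EuclideanSpace ℂ (Fin n) →L[ℂ] PiLp 2 (fun _ : Fin m => H))
    (hW : ‖W‖ ≤ 1) :
    ∃ T : EuclideanSpace ℂ (Fin n) →L[ℂ] PiLp 2 (fun _ : Fin (m + n * m₀) => H),
      (∀ x, ‖T x‖ = ‖x‖) ∧
      ∀ i, (ContinuousLinearMap.adjoint W).comp ((amp m (X i)).comp W) =
        (ContinuousLinearMap.adjoint T).comp ((amp (m + n * m₀) (X i)).comp T) :=
  contraction_compression_eq_isometry_compression_general X m₀ Z₀ hZ₀iso hZ₀zero m n W hW
end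

section
/- Let X = diag(λ_1, λ_2, ...) on ℓ²(ℕ) with λ_j nonzero reals of pairwise distinct absolute values converging to 0, and let W be a nonzero closed invariant subspace. Let J be the set of indices j for which some vector in W has nonzero j-th coordinate, and let j_0 ∈ J be the unique index maximizing |λ_j| over J. Then the basis vector e_{j_0} belongs to W. -/
/-!
A vector `v ∈ W` with `v j₀ ≠ 0` has, off `j₀`, only coordinates `j` with `|λ_j| < |λ_{j₀}|`.
Hence the coordinates of `λ_{j₀}⁻ⁿ Xⁿ v - v_{j₀} e_{j₀}`, namely `(λ_j / λ_{j₀})ⁿ v_j` for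
`j ≠ j₀`, tend to `0` and are dominated by `|v_j|`, so by dominated convergence for the
`ℓ²`-sum this difference tends to `0`. The vectors `λ_{j₀}⁻ⁿ Xⁿ v` lie in `W`, which is
closed, so `v_{j₀} e_{j₀} ∈ W`.
-/

open Filter Topology
open scoped ENNReal

namespace lp

variable {α β : Type*} {E : α → Type*} [∀ i, NormedAddCommGroup (E i)] {p : ℝ≥0∞} [Fact (1 ≤ p)]

theorem tendsto_zero_of_dominated (hp : p ≠ ∞) {l : Filter β} {F : β → lp E p}
    (g : lp E p) (hbound : ∀ n i, ‖F n i‖ ≤ ‖g i‖)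
    (hlim : ∀ i, Tendsto (fun n => F n i) l (𝓝 0)) : Tendsto F l (𝓝 0) := by
  have hp₀ : 0 < p.toReal :=
    ENNReal.toReal_pos (zero_lt_one.trans_le Fact.out).ne' hp
  have hrpow : Tendsto (fun n => ‖F n‖ ^ p.toReal) l (𝓝 0) := by
    simp_rw [norm_rpow_eq_tsum hp₀]
    have := tendsto_tsum_of_dominated_convergence (g := fun _ => (0 : ℝ))
      ((lp.memℓp g).summable hp₀)
      (fun i => by simpa [Real.zero_rpow hp₀.ne'] using (hlim i).norm.rpow_const (Or.inr hp₀.le))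
      (Eventually.of_forall fun n i => by
        simpa [Real.abs_rpow_of_nonneg] using
          Real.rpow_le_rpow (norm_nonneg _) (hbound n i) hp₀.le)
    rwa [tsum_zero] at this
  rw [tendsto_zero_iff_norm_tendsto_zero]
  have := hrpow.rpow_const (p := 1 / p.toReal) (Or.inr (by positivity))
  simpa [← Real.rpow_mul (norm_nonneg _), hp₀.ne', Real.zero_rpow] using this

variable {𝕜 : Type*} [NormedField 𝕜] {ι : Type*}

theorem apply_eq_mul_of_apply_single [DecidableEq ι] (hp : p ≠ ∞)
    {T : lp (fun _ : ι => 𝕜) p →L[𝕜] lp (fun _ : ι => 𝕜) p}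
    {μ : ι → 𝕜} (hT : ∀ i, T (lp.single (E := fun _ : ι => 𝕜) p i 1) = μ i • lp.single p i 1)
    (f : lp (fun _ : ι => 𝕜) p) (j : ι) : T f j = μ j * f j := by
  have hsum := ((evalCLM 𝕜 (fun _ : ι => 𝕜) p j).comp T).hasSum (lp.hasSum_single hp f)
  have hterm : ∀ i, ((evalCLM 𝕜 (fun _ : ι => 𝕜) p j).comp T) (lp.single p i (f i))
      = if i = j then μ j * f j else 0 := by
    intro i
    have : lp.single p i (f i) = f i • lp.single (E := fun _ : ι => 𝕜) p i 1 := by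
      rw [← lp.single_smul, smul_eq_mul, mul_one]
    rw [this, map_smul, ContinuousLinearMap.comp_apply, hT]
    by_cases h : i = j
    · subst h; simp [evalCLM, mul_comm]
    · simp [evalCLM, h]
  simp only [hterm] at hsum
  exact hsum.unique (hasSum_ite_eq j _)

theorem pow_apply_eq_pow_mul {T : lp (fun _ : ι => 𝕜) p →L[𝕜] lp (fun _ : ι => 𝕜) p}
    {μ : ι → 𝕜} (hT : ∀ f j, T f j = μ j * f j) (n : ℕ) (f : lp (fun _ : ι => 𝕜) p) (j : ι) :
    (T ^ n) f j = μ j ^ n * f j := by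
  induction n with
  | zero => simp
  | succ n ih => rw [pow_succ', mul_apply_eq_comp, hT, ih, pow_succ']; ring

theorem tendsto_inv_pow_smul_pow_apply [DecidableEq ι] (hp : p ≠ ∞)
    {T : lp (fun _ : ι => 𝕜) p →L[𝕜] lp (fun _ : ι => 𝕜) p}
    {μ : ι → 𝕜} (hT : ∀ f j, T f j = μ j * f j) {f : lp (fun _ : ι => 𝕜) p} {j₀ : ι}
    (hμ : μ j₀ ≠ 0) (hlt : ∀ j, j ≠ j₀ → f j ≠ 0 → ‖μ j‖ < ‖μ j₀‖) :
    Tendsto (fun n : ℕ => (μ j₀ ^ n)⁻¹ • (T ^ n) f) atTop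
      (𝓝 (f j₀ • lp.single (E := fun _ : ι => 𝕜) p j₀ 1)) := by
  rw [← tendsto_sub_nhds_zero_iff]
  have hcoord : ∀ (n : ℕ) j, ((μ j₀ ^ n)⁻¹ • (T ^ n) f - f j₀ • lp.single p j₀ 1 : lp _ p) j
      = if j = j₀ then 0 else (μ j / μ j₀) ^ n * f j := by
    intro n j
    rw [lp.coeFn_sub, lp.coeFn_smul, lp.coeFn_smul, Pi.sub_apply, Pi.smul_apply, Pi.smul_apply,
      pow_apply_eq_pow_mul hT, lp.single_apply, smul_eq_mul, smul_eq_mul]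
    by_cases h : j = j₀
    · subst h; simp [hμ]
    · simp [h, div_pow]; ring
  have hratio : ∀ j, j ≠ j₀ → f j ≠ 0 → ‖μ j / μ j₀‖ < 1 := fun j hj hfj => by
    rw [norm_div, div_lt_one (norm_pos_iff.mpr hμ)]; exact hlt j hj hfj
  refine tendsto_zero_of_dominated hp f (fun n j => ?_) (fun j => ?_)
  · rw [hcoord n j]
    split_ifs with hj
    · simp
    by_cases hfj : f j = 0
    · simp [hfj]
    rw [norm_mul, norm_pow]
    exact mul_le_of_le_one_left (norm_nonneg _) (pow_le_one₀ (norm_nonneg _) (hratio j hj hfj).le)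
  · refine (tendsto_congr (hcoord · j)).mpr ?_
    split_ifs with hj
    · exact tendsto_const_nhds
    by_cases hfj : f j = 0
    · simp [hfj]
    simpa using (tendsto_pow_atTop_nhds_zero_of_norm_lt_one (hratio j hj hfj)).mul_const (f j)

end lp

theorem top_eigenvector_mem_invariant_subspace_general
    (lam : ℕ → ℝ) (hne : ∀ j, lam j ≠ 0)
    (hdist : ∀ j k, |lam j| = |lam k| → j = k)
    (X : lp (fun _ : ℕ => ℂ) 2 →L[ℂ] lp (fun _ : ℕ => ℂ) 2)
    (hX : ∀ j, X (lp.single 2 j (1 : ℂ)) = (lam j : ℂ) • lp.single 2 j (1 : ℂ))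
    (W : Submodule ℂ (lp (fun _ : ℕ => ℂ) 2))
    (hWclosed : IsClosed (W : Set (lp (fun _ : ℕ => ℂ) 2)))
    (hWinv : ∀ v ∈ W, X v ∈ W)
    (j₀ : ℕ) (hj₀mem : ∃ v ∈ W, v j₀ ≠ 0)
    (hj₀max : ∀ j, (∃ v ∈ W, v j ≠ 0) → |lam j| ≤ |lam j₀|) :
    lp.single 2 j₀ (1 : ℂ) ∈ W := by
  obtain ⟨v, hvW, hvj₀⟩ := hj₀mem
  have hdiag := lp.apply_eq_mul_of_apply_single ENNReal.ofNat_ne_top hX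
  have hpowW : ∀ n : ℕ, (X ^ n) v ∈ W := by
    intro n
    induction n with
    | zero => simpa using hvW
    | succ n ih => rw [pow_succ', mul_apply_eq_comp]; exact hWinv _ ih
  have hlt : ∀ j, j ≠ j₀ → v j ≠ 0 → ‖(lam j : ℂ)‖ < ‖(lam j₀ : ℂ)‖ := fun j hj hvj => by
    simp only [Complex.norm_real, Real.norm_eq_abs]
    exact (hj₀max j ⟨v, hvW, hvj⟩).lt_of_ne (mt (hdist j j₀) hj)
  have htendsto := lp.tendsto_inv_pow_smul_pow_apply ENNReal.ofNat_ne_top hdiag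
    (Complex.ofReal_ne_zero.mpr (hne j₀)) hlt
  have hmem : v j₀ • lp.single 2 j₀ (1 : ℂ) ∈ W :=
    hWclosed.mem_of_tendsto htendsto (Eventually.of_forall fun n => W.smul_mem _ (hpowW n))
  simpa [hvj₀] using W.smul_mem (v j₀)⁻¹ hmem

/-- for `X = diag(λ₁, λ₂, …)` on `ℓ²(ℕ)` with `λ_j` nonzero reals of
pairwise distinct absolute values converging to `0`, and `W ≠ {0}` a closed invariant
subspace, if `j₀` is the index maximizing `|λ_j|` over the set
`J = { j : some v ∈ W has v_j ≠ 0 }`, then `e_{j₀} ∈ W`. -/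
theorem top_eigenvector_mem_invariant_subspace
    (lam : ℕ → ℝ) (hne : ∀ j, lam j ≠ 0)
    (hdist : ∀ j k, |lam j| = |lam k| → j = k)
    (hlim : Filter.Tendsto lam Filter.atTop (nhds 0))
    (X : lp (fun _ : ℕ => ℂ) 2 →L[ℂ] lp (fun _ : ℕ => ℂ) 2)
    (hX : ∀ j, X (lp.single 2 j (1 : ℂ)) = (lam j : ℂ) • lp.single 2 j (1 : ℂ))
    (W : Submodule ℂ (lp (fun _ : ℕ => ℂ) 2))
    (hWclosed : IsClosed (W : Set (lp (fun _ : ℕ => ℂ) 2)))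
    (hWinv : ∀ v ∈ W, X v ∈ W) (hWne : W ≠ ⊥)
    (j₀ : ℕ) (hj₀mem : ∃ v ∈ W, v j₀ ≠ 0)
    (hj₀max : ∀ j, (∃ v ∈ W, v j ≠ 0) → |lam j| ≤ |lam j₀|) :
    lp.single 2 j₀ (1 : ℂ) ∈ W :=
  top_eigenvector_mem_invariant_subspace_general lam hne hdist X hX W hWclosed hWinv j₀ hj₀mem
    hj₀max
end
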